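/- The omninomination rule f^O, which returns the uniform lottery over the set of all alternatives top-ranked by at least one voter, is weakly strategyproof on strict preference profiles. -/
import Mathlib


open Classical Finset

structure StrictPref (A : Type*) where
  rel : A → A → Prop
  trans : ∀ {a b c}, rel a b → rel b c → rel a c
  irrefl : ∀ a, ¬ rel a a
  total : ∀ a b, a ≠ b → rel a b ∨ rel b a

variable {A V : Type*} [Fintype A] [Fintype V]

/-- Probability assigned by `p` to the upper contour set of `x` w.r.t. strict relation `r`. -/
noncomputable def probUC (p : A → ℝ) (r : A → A → Prop) (x : A) : ℝ :=
  ∑ y ∈ Finset.univ.filter (fun y => y = x ∨ r y x), p y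

/-- `p` (weakly) stochastically dominates `q` w.r.t. `r`. -/
def SD (r : A → A → Prop) (p q : A → ℝ) : Prop :=
  ∀ x, probUC q r x ≤ probUC p r x

/-- `p` strictly stochastically dominates `q` w.r.t. `r`. -/
def StrictSD (r : A → A → Prop) (p q : A → ℝ) : Prop :=
  SD r p q ∧ ∃ x, probUC q r x < probUC p r x

def IsLottery (p : A → ℝ) : Prop := (∀ a, 0 ≤ p a) ∧ ∑ a, p a = 1

/-- Weak strategyproofness of a social decision scheme on strict profiles. -/
def WeakSP (f : (V → StrictPref A) → A → ℝ) : Prop :=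
  ∀ R R' : V → StrictPref A, ∀ i : V,
    (∀ j, j ≠ i → R j = R' j) → ¬ StrictSD (R i).rel (f R') (f R)

def IsTopOf (r : A → A → Prop) (x : A) : Prop := ∀ y, y ≠ x → r x y

/-- The set of alternatives top-ranked by at least one voter. -/
noncomputable def OMNI (R : V → StrictPref A) : Finset A :=
  Finset.univ.filter (fun x => ∃ i, IsTopOf (R i).rel x)

noncomputable def unif (X : Finset A) : A → ℝ :=
  fun x => if x ∈ X then 1 / (X.card : ℝ) else 0

omit [Fintype A] in
lemma StrictPref.asymm (r : StrictPref A) {a b : A} (h : r.rel a b) : ¬ r.rel b a :=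
  fun h' => r.irrefl a (r.trans h h')

lemma topOfUnique (r : StrictPref A) {x y : A} (hx : IsTopOf r.rel x) (hy : IsTopOf r.rel y) :
    x = y := by
  by_contra hne
  exact r.asymm (hx y (Ne.symm hne)) (hy x hne)

omit [Fintype A] in
lemma exists_top_finset (r : StrictPref A) (s : Finset A) (hs : s.Nonempty) :
    ∃ x ∈ s, ∀ y ∈ s, y ≠ x → r.rel x y := by
  classical
  induction s using Finset.induction_on with
  | empty => exact absurd hs (by simp)
  | @insert a s ha ih =>
    by_cases hne : s.Nonempty
    · obtain ⟨x, hx, hxt⟩ := ih hne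
      have hax : a ≠ x := fun h => ha (h ▸ hx)
      rcases r.total a x hax with h1 | h1
      · refine ⟨a, mem_insert_self _ _, fun y hy hya => ?_⟩
        rcases mem_insert.1 hy with rfl | hy'
        · exact absurd rfl hya
        · by_cases hyx : y = x
          · exact hyx ▸ h1
          · exact r.trans h1 (hxt y hy' hyx)
      · refine ⟨x, mem_insert_of_mem hx, fun y hy hyx => ?_⟩
        rcases mem_insert.1 hy with rfl | hy'
        · exact h1
        · exact hxt y hy' hyx
    · rw [Finset.not_nonempty_iff_eq_empty] at hne
      subst hne
      exact ⟨a, mem_insert_self _ _, by simp⟩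

lemma exists_top [Nonempty A] (r : StrictPref A) : ∃ x, IsTopOf r.rel x := by
  obtain ⟨x, _, hx⟩ := exists_top_finset r Finset.univ univ_nonempty
  exact ⟨x, fun y hy => hx y (mem_univ y) hy⟩

lemma probUC_top (p : A → ℝ) (r : StrictPref A) {a : A} (ha : IsTopOf r.rel a) :
    probUC p r.rel a = p a := by
  have : Finset.univ.filter (fun y => y = a ∨ r.rel y a) = {a} := by
    ext y
    simp only [mem_filter, mem_univ, true_and, mem_singleton]
    constructor
    · rintro (rfl | h)
      · rfl
      · by_contra hya
        exact r.asymm (ha y hya) h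
    · rintro rfl; exact Or.inl rfl
  rw [probUC, this, Finset.sum_singleton]

/-- The omninomination rule, returning the uniform lottery over all alternatives
top-ranked by at least one voter, is weakly strategyproof. -/
theorem omninomination_weakSP :
    WeakSP (fun R : V → StrictPref A => unif (OMNI R)) := by
  intro R R' i hji hSSD
  obtain ⟨hSD, x₀, hx₀⟩ := hSSD
  simp only [] at hSD hx₀
  have : Nonempty A := ⟨x₀⟩
  suffices heq : OMNI R' = OMNI R by
    rw [heq] at hx₀; exact lt_irrefl _ hx₀
  obtain ⟨a, ha⟩ := exists_top (R i)
  have haT : a ∈ OMNI R := by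
    simp only [OMNI, mem_filter, mem_univ, true_and]
    exact ⟨i, ha⟩
  have hcardT : 0 < ((OMNI R).card : ℝ) := by
    exact_mod_cast Finset.card_pos.2 ⟨a, haT⟩
  have hq : probUC (unif (OMNI R)) (R i).rel a = 1 / ((OMNI R).card : ℝ) := by
    rw [probUC_top _ _ ha, unif, if_pos haT]
  have hle := hSD a
  rw [probUC_top _ _ ha, probUC_top _ _ ha] at hle
  have hqa : unif (OMNI R) a = 1 / ((OMNI R).card : ℝ) := if_pos haT
  have hpos : 0 < unif (OMNI R') a := by
    refine lt_of_lt_of_le ?_ hle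
    rw [hqa]
    positivity
  have haT' : a ∈ OMNI R' := by
    by_contra h
    rw [unif] at hpos
    simp [h] at hpos
  have hcardT' : 0 < ((OMNI R').card : ℝ) := by
    exact_mod_cast Finset.card_pos.2 ⟨a, haT'⟩
  have hcardle : (OMNI R').card ≤ (OMNI R).card := by
    rw [hqa, unif, if_pos haT'] at hle
    have h2 : ((OMNI R').card : ℝ) ≤ ((OMNI R).card : ℝ) := by
      rw [div_le_div_iff₀ hcardT hcardT', one_mul, one_mul] at hle
      exact hle
    exact_mod_cast h2
  obtain ⟨j, hj⟩ := (Finset.mem_filter.1 haT').2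
  by_cases hjeq : j = i
  · subst hjeq
    ext x
    simp only [OMNI, mem_filter, mem_univ, true_and]
    constructor
    · rintro ⟨k, hk⟩
      by_cases hk' : k = j
      · subst hk'
        have hxa : x = a := topOfUnique (R' k) hk hj
        exact ⟨k, hxa ▸ ha⟩
      · refine ⟨k, ?_⟩
        rw [hji k hk']
        exact hk
    · rintro ⟨k, hk⟩
      by_cases hk' : k = j
      · subst hk'
        have hxa : x = a := topOfUnique (R k) hk ha
        exact ⟨k, hxa ▸ hj⟩
      · refine ⟨k, ?_⟩
        rw [← hji k hk']
        exact hk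
  · have hsub : OMNI R ⊆ OMNI R' := by
      intro x hx
      obtain ⟨k, hk⟩ := (Finset.mem_filter.1 hx).2
      by_cases hk' : k = i
      · subst hk'
        have hxa : x = a := topOfUnique (R k) hk ha
        exact hxa ▸ haT'
      · simp only [OMNI, mem_filter, mem_univ, true_and]
        refine ⟨k, ?_⟩
        rw [← hji k hk']
        exact hk
    exact (Finset.eq_of_subset_of_card_le hsub hcardle).symm
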